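/- Let Φ be a finite reduced crystallographic irreducible root system in a finite-dimensional real inner product space with a fixed base Δ, let T be a closed subset of Φ, and let (β₁, β₂, …, β_k) be a simple root path in Δ such that βᵢ ∈ [T ∪ −T] for all 1 ≤ i ≤ k−1 and β_k ∉ [T ∪ −T]. Then δ := β₁ + β₂ + ⋯ + β_k is a root, and there do not exist elements γ₁, γ₂, …, γ_p ∈ [T ∪ −T] (not necessarily distinct) with δ = γ₁ + γ₂ + ⋯ + γ_p. -/

import Mathlib

open scoped RealInnerProductSpace

/-- A finite reduced crystallographic root system in a finite-dimensional real
inner product space. -/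
structure IsRootSystem {V : Type*} [NormedAddCommGroup V] [InnerProductSpace ℝ V]
    [FiniteDimensional ℝ V] (Φ : Set V) : Prop where
  finite : Φ.Finite
  ne_zero : ∀ α ∈ Φ, α ≠ 0
  spans : Submodule.span ℝ Φ = ⊤
  reduced : ∀ α ∈ Φ, ∀ t : ℝ, t • α ∈ Φ → t = 1 ∨ t = -1
  reflection_mem : ∀ α ∈ Φ, ∀ β ∈ Φ, β - (2 * ⟪β, α⟫ / ⟪α, α⟫) • α ∈ Φ
  crystallographic : ∀ α ∈ Φ, ∀ β ∈ Φ, ∃ n : ℤ, 2 * ⟪β, α⟫ / ⟪α, α⟫ = (n : ℝ)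

/-- A subset `S` of a root system `Φ` is closed if for any `x, y ∈ S`,
`x + y ∈ Φ` implies `x + y ∈ S`. -/
def IsClosedSubset {V : Type*} [NormedAddCommGroup V] [InnerProductSpace ℝ V]
    (Φ S : Set V) : Prop :=
  S ⊆ Φ ∧ ∀ x ∈ S, ∀ y ∈ S, x + y ∈ Φ → x + y ∈ S

/-- The closure `[S]` of `S ⊆ Φ`: the smallest closed subset of `Φ` containing `S`,
i.e. the intersection of all closed subsets of `Φ` containing `S`. -/
def rootClosure {V : Type*} [NormedAddCommGroup V] [InnerProductSpace ℝ V]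
    (Φ S : Set V) : Set V :=
  ⋂₀ {U : Set V | IsClosedSubset Φ U ∧ S ⊆ U}

/-- A base (set of simple roots) of a root system `Φ`: a linearly independent
subset such that every root is an integer combination of elements of `Δ` with all
coefficients of the same sign. -/
def IsBase {V : Type*} [NormedAddCommGroup V] [InnerProductSpace ℝ V]
    (Φ Δ : Set V) : Prop :=
  Δ ⊆ Φ ∧ LinearIndependent ℝ ((↑) : Δ → V) ∧
    ∀ α ∈ Φ, ∃ c : V →₀ ℤ, (c.support : Set V) ⊆ Δ ∧
      α = c.sum (fun v n => (n : ℝ) • v) ∧ ((∀ v, 0 ≤ c v) ∨ (∀ v, c v ≤ 0))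

/-- A root system is irreducible if it cannot be partitioned into two nonempty
orthogonal subsets. -/
def IsIrreducibleRootSystem {V : Type*} [NormedAddCommGroup V] [InnerProductSpace ℝ V]
    (Φ : Set V) : Prop :=
  ¬ ∃ S T : Set V, S.Nonempty ∧ T.Nonempty ∧ Φ = S ∪ T ∧
      ∀ x ∈ S, ∀ y ∈ T, ⟪x, y⟫ = 0

/-- A simple root path: a finite sequence `β 0, β 1, …, β (k-1)` of pairwise
distinct simple roots in `Δ` such that consecutive roots are non-orthogonal. -/
def IsSimpleRootPath {V : Type*} [NormedAddCommGroup V] [InnerProductSpace ℝ V]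
    (Δ : Set V) (k : ℕ) (β : ℕ → V) : Prop :=
  1 ≤ k ∧ (∀ i < k, β i ∈ Δ) ∧ (∀ i < k, ∀ j < k, β i = β j → i = j) ∧
    ∀ i, i + 1 < k → ⟪β i, β (i + 1)⟫ ≠ 0

/-!
Two facts about roots drive the argument: if `⟪α, β⟫ < 0` and `α + β ≠ 0` then `α + β` is a
root, and distinct simple roots have non-positive inner product. Along a simple root path each
new vertex therefore meets the previous partial sum negatively, so all partial sums, and `δ`, are
roots. A root that is a sum of elements of a closed set `C ⊆ Φ` lies in `C`: some summand has
positive inner product with the sum, and removing it leaves a root, which lies in `C` by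
induction. So a decomposition of `δ` would put `δ` in `[T ∪ -T]`. This closure is symmetric, so
subtracting `β₁, β₂, …` in turn keeps the sums of the tail paths (which are roots) in it, down to
`β_k ∉ [T ∪ -T]`.
-/
namespace IsRootSystem

variable {V : Type*} [NormedAddCommGroup V] [InnerProductSpace ℝ V] [FiniteDimensional ℝ V]
  {Φ : Set V} {α β : V}

theorem neg_mem (hΦ : IsRootSystem Φ) (hα : α ∈ Φ) : -α ∈ Φ := by
  have hαα : ⟪α, α⟫ ≠ 0 := inner_self_ne_zero.mpr (hΦ.ne_zero α hα)
  have h := hΦ.reflection_mem α hα α hα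
  rwa [mul_div_assoc, div_self hαα, mul_one, two_smul, sub_add_cancel_left] at h

theorem neg_subset {S : Set V} (hΦ : IsRootSystem Φ) (hS : S ⊆ Φ) : -S ⊆ Φ :=
  fun α hα => neg_neg α ▸ hΦ.neg_mem (hS hα)

theorem add_mem_of_inner_neg (hΦ : IsRootSystem Φ) (hα : α ∈ Φ) (hβ : β ∈ Φ)
    (hαβ : ⟪α, β⟫ < 0) (hne : α + β ≠ 0) : α + β ∈ Φ := by
  have hαα : 0 < ⟪α, α⟫ := real_inner_self_pos.mpr (hΦ.ne_zero α hα)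
  have hββ : 0 < ⟪β, β⟫ := real_inner_self_pos.mpr (hΦ.ne_zero β hβ)
  rw [real_inner_comm] at hαβ
  obtain ⟨m, hm⟩ := hΦ.crystallographic α hα β hβ
  obtain ⟨n, hn⟩ := hΦ.crystallographic β hβ α hα
  rw [real_inner_comm] at hn
  have hm0 : m < 0 := by exact_mod_cast hm ▸ div_neg_of_neg_of_pos (by linarith) hαα
  have hn0 : n < 0 := by exact_mod_cast hn ▸ div_neg_of_neg_of_pos (by linarith) hββ
  obtain rfl | hm2 : m = -1 ∨ m ≤ -2 := by omega
  · have h := hΦ.reflection_mem α hα β hβ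
    rwa [hm, Int.cast_neg, Int.cast_one, neg_one_smul, sub_neg_eq_add, add_comm] at h
  obtain rfl | hn2 : n = -1 ∨ n ≤ -2 := by omega
  · have h := hΦ.reflection_mem β hβ α hα
    rwa [real_inner_comm, hn, Int.cast_neg, Int.cast_one, neg_one_smul, sub_neg_eq_add] at h
  -- two Cartan integers `≤ -2` would force `‖α + β‖² ≤ 0`
  have hm' : 2 * ⟪β, α⟫ ≤ -2 * ⟪α, α⟫ := by
    rw [← div_le_iff₀ hαα, hm]; exact_mod_cast hm2
  have hn' : 2 * ⟪β, α⟫ ≤ -2 * ⟪β, β⟫ := by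
    rw [← div_le_iff₀ hββ, hn]; exact_mod_cast hn2
  have := real_inner_self_pos.mpr hne
  rw [real_inner_add_add_self, real_inner_comm β α] at this
  linarith

theorem sub_mem_of_inner_pos (hΦ : IsRootSystem Φ) (hα : α ∈ Φ) (hβ : β ∈ Φ)
    (hαβ : 0 < ⟪α, β⟫) (hne : α ≠ β) : α - β ∈ Φ := by
  rw [sub_eq_add_neg]
  exact hΦ.add_mem_of_inner_neg hα (hΦ.neg_mem hβ) (by rwa [inner_neg_right, neg_neg_iff_pos])
    (by rwa [← sub_eq_add_neg, sub_ne_zero])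

end IsRootSystem

namespace IsBase

variable {V : Type*} [NormedAddCommGroup V] [InnerProductSpace ℝ V] {Φ Δ : Set V} {α β : V}

theorem coeff_eq_of_sub_eq_sum (hΔ : IsBase Φ Δ) (hα : α ∈ Δ) (hβ : β ∈ Δ) (hne : α ≠ β)
    {c : V →₀ ℤ} (hc : (c.support : Set V) ⊆ Δ) (h : α - β = c.sum fun v n => (n : ℝ) • v) :
    c α = 1 ∧ c β = -1 := by
  classical
  let c' : V →₀ ℝ := c.mapRange (↑) Int.cast_zero
  have hc' : c' = Finsupp.single α 1 - Finsupp.single β 1 := by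
    refine linearIndepOn_iffₛ.mp (linearIndependent_subtype_iff.mp hΔ.2.1) c' ?_ _ ?_ ?_
    · exact (Finsupp.mem_supported ℝ c').mpr
        ((Finset.coe_subset.mpr Finsupp.support_mapRange).trans hc)
    · exact sub_mem (Finsupp.single_mem_supported ℝ 1 hα) (Finsupp.single_mem_supported ℝ 1 hβ)
    · rw [map_sub, Finsupp.linearCombination_single, Finsupp.linearCombination_single,
        Finsupp.linearCombination_apply]
      simpa [c', Finsupp.sum_mapRange_index] using h.symm
  have hcα := DFunLike.congr_fun hc' α
  have hcβ := DFunLike.congr_fun hc' β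
  simp only [c', Finsupp.mapRange_apply, Finsupp.coe_sub, Pi.sub_apply, Finsupp.single_eq_same,
    Finsupp.single_eq_of_ne hne, Finsupp.single_eq_of_ne hne.symm] at hcα hcβ
  exact ⟨by exact_mod_cast hcα.trans (sub_zero 1), by exact_mod_cast hcβ.trans (zero_sub 1)⟩

theorem inner_nonpos [FiniteDimensional ℝ V] (hΦ : IsRootSystem Φ) (hΔ : IsBase Φ Δ)
    (hα : α ∈ Δ) (hβ : β ∈ Δ) (hne : α ≠ β) : ⟪α, β⟫ ≤ 0 := by
  by_contra! hpos
  obtain ⟨c, hc, hsum, hsign⟩ := hΔ.2.2 _ (hΦ.sub_mem_of_inner_pos (hΔ.1 hα) (hΔ.1 hβ) hpos hne)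
  obtain ⟨hcα, hcβ⟩ := hΔ.coeff_eq_of_sub_eq_sum hα hβ hne hc hsum
  rcases hsign with h | h
  · linarith [h β]
  · linarith [h α]

end IsBase

section Closure

variable {V : Type*} [NormedAddCommGroup V] [InnerProductSpace ℝ V] {Φ S C : Set V}

theorem rootClosure_subset (hS : S ⊆ Φ) : rootClosure Φ S ⊆ Φ :=
  Set.sInter_subset_of_mem ⟨⟨subset_rfl, fun _ _ _ _ h => h⟩, hS⟩

theorem isClosedSubset_rootClosure (hS : S ⊆ Φ) : IsClosedSubset Φ (rootClosure Φ S) :=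
  ⟨rootClosure_subset hS, fun x hx y hy hxy U hU => hU.1.2 x (hx U hU) y (hy U hU) hxy⟩

theorem exists_mem_inner_sum_pos {ι : Type*} {s : Finset ι} {f : ι → V}
    (h : ∑ i ∈ s, f i ≠ 0) : ∃ i ∈ s, 0 < ⟪∑ j ∈ s, f j, f i⟫ := by
  by_contra! hle
  exact h (real_inner_self_nonpos.mp (by rw [inner_sum]; exact Finset.sum_nonpos hle))

variable [FiniteDimensional ℝ V]

theorem IsClosedSubset.neg (hΦ : IsRootSystem Φ) (hC : IsClosedSubset Φ C) :
    IsClosedSubset Φ (-C) := by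
  refine ⟨hΦ.neg_subset hC.1, fun x hx y hy hxy => ?_⟩
  rw [Set.mem_neg, neg_add]
  exact hC.2 _ hx _ hy (neg_add x y ▸ hΦ.neg_mem hxy)

theorem neg_mem_rootClosure (hΦ : IsRootSystem Φ) (hS : -S = S) {x : V}
    (hx : x ∈ rootClosure Φ S) : -x ∈ rootClosure Φ S :=
  fun U hU => hx (-U) ⟨hU.1.neg hΦ, hS ▸ Set.neg_subset_neg.mpr hU.2⟩

theorem IsClosedSubset.sum_mem (hΦ : IsRootSystem Φ) (hC : IsClosedSubset Φ C) {ι : Type*}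
    {s : Finset ι} {f : ι → V} (hf : ∀ i ∈ s, f i ∈ C)
    (hsum : ∑ i ∈ s, f i ∈ Φ) : ∑ i ∈ s, f i ∈ C := by
  classical
  induction s using Finset.strongInduction with
  | H s ih =>
  obtain ⟨i, hi, hpos⟩ := exists_mem_inner_sum_pos (hΦ.ne_zero _ hsum)
  by_cases hfi : ∑ j ∈ s, f j = f i
  · exact hfi ▸ hf i hi
  have hrest : ∑ j ∈ s.erase i, f j = ∑ j ∈ s, f j - f i := Finset.sum_erase_eq_sub hi
  have hrestC : ∑ j ∈ s.erase i, f j ∈ C :=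
    ih _ (Finset.erase_ssubset hi) (fun j hj => hf j (Finset.mem_of_mem_erase hj))
      (hrest ▸ hΦ.sub_mem_of_inner_pos hsum (hC.1 (hf i hi)) hpos hfi)
  rw [← Finset.add_sum_erase s f hi] at hsum ⊢
  exact hC.2 _ (hf i hi) _ hrestC hsum

end Closure

namespace IsSimpleRootPath

open Finset

variable {V : Type*} [NormedAddCommGroup V] [InnerProductSpace ℝ V]
  {Φ Δ C : Set V} {k : ℕ} {β : ℕ → V}

theorem of_succ (hpath : IsSimpleRootPath Δ (k + 1) β) (hk : 1 ≤ k) :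
    IsSimpleRootPath Δ k β :=
  ⟨hk, fun i hi => hpath.2.1 i (by omega),
    fun i hi j hj => hpath.2.2.1 i (by omega) j (by omega),
    fun i hi => hpath.2.2.2 i (by omega)⟩

theorem tail (hpath : IsSimpleRootPath Δ (k + 1) β) (hk : 1 ≤ k) :
    IsSimpleRootPath Δ k (fun i => β (i + 1)) :=
  ⟨hk, fun i hi => hpath.2.1 (i + 1) (by omega),
    fun i hi j hj hij => by have := hpath.2.2.1 (i + 1) (by omega) (j + 1) (by omega) hij; omega,
    fun i hi => hpath.2.2.2 (i + 1) (by omega)⟩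

theorem sum_ne_zero (hΔ : IsBase Φ Δ) (hpath : IsSimpleRootPath Δ k β) :
    ∑ i ∈ range k, β i ≠ 0 := by
  have hinj : Set.InjOn β (range k) := fun i hi j hj =>
    hpath.2.2.1 i (mem_range.mp hi) j (mem_range.mp hj)
  have hli : LinearIndepOn ℝ β (range k : Set ℕ) :=
    (linearIndepOn_iff_image hinj).mpr <| (linearIndependent_subtype_iff.mp hΔ.2.1).mono <| by
      rintro _ ⟨i, hi, rfl⟩; exact hpath.2.1 i (mem_range.mp hi)
  intro h0
  have := linearIndepOn_finset_iff.mp hli 1 (by simpa using h0) 0 (mem_range.mpr hpath.1)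
  exact one_ne_zero this

variable [FiniteDimensional ℝ V]

theorem inner_nonpos (hΦ : IsRootSystem Φ) (hΔ : IsBase Φ Δ) (hpath : IsSimpleRootPath Δ k β)
    {i j : ℕ} (hi : i < k) (hj : j < k) (hij : i ≠ j) : ⟪β i, β j⟫ ≤ 0 :=
  hΔ.inner_nonpos hΦ (hpath.2.1 i hi) (hpath.2.1 j hj) fun h => hij (hpath.2.2.1 i hi j hj h)

theorem inner_sum_last_neg (hΦ : IsRootSystem Φ) (hΔ : IsBase Φ Δ)
    (hpath : IsSimpleRootPath Δ (k + 1) β) (hk : 1 ≤ k) : ⟪∑ i ∈ range k, β i, β k⟫ < 0 := by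
  obtain ⟨j, rfl⟩ : ∃ j, k = j + 1 := ⟨k - 1, by omega⟩
  have hprev : ⟪β j, β (j + 1)⟫ < 0 :=
    (hpath.inner_nonpos hΦ hΔ (by omega) (by omega) (by omega)).lt_of_ne (hpath.2.2.2 j (by omega))
  have hrest : ∑ i ∈ range j, ⟪β i, β (j + 1)⟫ ≤ 0 := sum_nonpos fun i hi =>
    hpath.inner_nonpos hΦ hΔ (by simp at hi; omega) (by omega) (by simp at hi; omega)
  rw [sum_inner, sum_range_succ]
  linarith

theorem sum_mem (hΦ : IsRootSystem Φ) (hΔ : IsBase Φ Δ) (hpath : IsSimpleRootPath Δ k β) :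
    ∑ i ∈ range k, β i ∈ Φ := by
  induction k with
  | zero => exact absurd hpath.1 (by norm_num)
  | succ k ih =>
    rcases Nat.eq_zero_or_pos k with rfl | hk
    · simpa using hΔ.1 (hpath.2.1 0 one_pos)
    have hne := hpath.sum_ne_zero hΔ
    rw [sum_range_succ] at hne ⊢
    exact hΦ.add_mem_of_inner_neg (ih (hpath.of_succ hk)) (hΔ.1 (hpath.2.1 k (by omega)))
      (hpath.inner_sum_last_neg hΦ hΔ hk) hne

theorem sum_notMem (hΦ : IsRootSystem Φ) (hΔ : IsBase Φ Δ) (hC : IsClosedSubset Φ C)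
    (hC_neg : ∀ x ∈ C, -x ∈ C) (hpath : IsSimpleRootPath Δ k β)
    (hmem : ∀ i, i + 1 < k → β i ∈ C) (hlast : β (k - 1) ∉ C) :
    ∑ i ∈ range k, β i ∉ C := by
  induction k generalizing β with
  | zero => exact absurd hpath.1 (by norm_num)
  | succ k ih =>
    rcases Nat.eq_zero_or_pos k with rfl | hk
    · simpa using hlast
    intro hsum
    have htail := hpath.tail hk
    have hsub := hC.2 _ hsum _ (hC_neg _ (hmem 0 (by omega)))
    rw [sum_range_succ', add_neg_cancel_right] at hsub
    exact ih htail (fun i hi => hmem (i + 1) (by omega))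
      (by rwa [Nat.sub_add_cancel hk]) (hsub (htail.sum_mem hΦ hΔ))

end IsSimpleRootPath

theorem simpleRootPath_sum_not_sum_of_closure_general {V : Type*} [NormedAddCommGroup V]
    [InnerProductSpace ℝ V] [FiniteDimensional ℝ V] (Φ Δ T : Set V)
    (hΦ : IsRootSystem Φ) (hΔ : IsBase Φ Δ)
    (hT : IsClosedSubset Φ T) (k : ℕ) (β : ℕ → V)
    (hpath : IsSimpleRootPath Δ k β)
    (hmem : ∀ i, i + 1 < k → β i ∈ rootClosure Φ (T ∪ -T))
    (hlast : β (k - 1) ∉ rootClosure Φ (T ∪ -T)) :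
    (∑ i ∈ Finset.range k, β i) ∈ Φ ∧
      ¬ ∃ (p : ℕ) (γ : ℕ → V), 1 ≤ p ∧ (∀ i < p, γ i ∈ rootClosure Φ (T ∪ -T)) ∧
        ∑ i ∈ Finset.range k, β i = ∑ i ∈ Finset.range p, γ i := by
  have hsym : -(T ∪ -T) = T ∪ -T := by rw [Set.union_neg, neg_neg, Set.union_comm]
  have hC : IsClosedSubset Φ (rootClosure Φ (T ∪ -T)) :=
    isClosedSubset_rootClosure (Set.union_subset hT.1 (hΦ.neg_subset hT.1))
  have hδ := hpath.sum_mem hΦ hΔ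
  refine ⟨hδ, fun ⟨p, γ, _, hγ, heq⟩ => ?_⟩
  refine hpath.sum_notMem hΦ hΔ hC (fun x => neg_mem_rootClosure hΦ hsym) hmem hlast ?_
  rw [heq] at hδ ⊢
  exact hC.sum_mem hΦ (fun i hi => hγ i (Finset.mem_range.mp hi)) hδ

/-- If a simple root path lies in `[T ∪ -T]` except at its last vertex, then its sum
`δ` is a root which is not a sum of (not necessarily distinct) elements of `[T ∪ -T]`. -/
theorem simpleRootPath_sum_not_sum_of_closure {V : Type*} [NormedAddCommGroup V]
    [InnerProductSpace ℝ V] [FiniteDimensional ℝ V] (Φ Δ T : Set V)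
    (hΦ : IsRootSystem Φ) (hirr : IsIrreducibleRootSystem Φ) (hΔ : IsBase Φ Δ)
    (hT : IsClosedSubset Φ T) (k : ℕ) (β : ℕ → V)
    (hpath : IsSimpleRootPath Δ k β)
    (hmem : ∀ i, i + 1 < k → β i ∈ rootClosure Φ (T ∪ -T))
    (hlast : β (k - 1) ∉ rootClosure Φ (T ∪ -T)) :
    (∑ i ∈ Finset.range k, β i) ∈ Φ ∧
      ¬ ∃ (p : ℕ) (γ : ℕ → V), 1 ≤ p ∧ (∀ i < p, γ i ∈ rootClosure Φ (T ∪ -T)) ∧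
        ∑ i ∈ Finset.range k, β i = ∑ i ∈ Finset.range p, γ i :=
  simpleRootPath_sum_not_sum_of_closure_general Φ Δ T hΦ hΔ hT k β hpath hmem hlast
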